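/- Let $(V_n)$ be nonnegative random variables such that for some $p > 1$, $\varepsilon \ge 0$, and an integrable function $\tilde G$, one has $\frac{1}{j}\sum_{n=1}^{\lceil j^{p/(p+\varepsilon)}\rceil}\mathsf{P}(V_n > t) \le \tilde G(t)$ for all $j \ge 1$, $t > 0$. Then with $\tilde V_n := \min(V_n, n^{1+\varepsilon/p})$, one has $\mathsf{E}\sum_{n=1}^\infty \frac{\tilde V_n^p}{n^{p+\varepsilon}} < \infty$. -/

import Mathlib

open MeasureTheory Filter Finset
open scoped ENNReal NNReal

lemma mvt_rpow {s : ℝ} (a b : ℝ) (ha : 0 < a) (hab : a < b) :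
    ∃ c, a < c ∧ c < b ∧ a ^ (-s) - b ^ (-s) = s * c ^ (-s - 1) * (b - a) := by
  obtain ⟨c, hc, hceq⟩ := exists_hasDerivAt_eq_slope (fun x : ℝ => x ^ (-s))
    (fun x => (-s) * x ^ (-s - 1)) hab
    (fun x hx => (Real.continuousAt_rpow_const x (-s)
      (Or.inl (ne_of_gt (lt_of_lt_of_le ha hx.1)))).continuousWithinAt)
    (fun x hx => Real.hasDerivAt_rpow_const (Or.inl (ne_of_gt (lt_trans ha hx.1))))
  refine ⟨c, hc.1, hc.2, ?_⟩
  have hba : b - a ≠ 0 := sub_ne_zero.2 (ne_of_gt hab)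
  have h2 := (div_eq_iff hba).1 hceq.symm
  linear_combination -h2
lemma tele_hasSum {s : ℝ} (hs : 0 < s) (N : ℕ) (hN : 1 ≤ N) :
    HasSum (fun m : ℕ => ((N + m : ℕ) : ℝ) ^ (-s) - ((N + m + 1 : ℕ) : ℝ) ^ (-s))
      ((N : ℝ) ^ (-s)) := by
  have hpos : ∀ m : ℕ, (0:ℝ) < ((N + m : ℕ) : ℝ) := by
    intro m
    have : 1 ≤ N + m := le_trans hN (Nat.le_add_right N m)
    exact_mod_cast Nat.lt_of_lt_of_le Nat.zero_lt_one this
  have hnn : ∀ m : ℕ, 0 ≤ ((N + m : ℕ) : ℝ) ^ (-s) - ((N + m + 1 : ℕ) : ℝ) ^ (-s) := by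
    intro m
    have : ((N + m : ℕ) : ℝ) ≤ ((N + m + 1 : ℕ) : ℝ) := by exact_mod_cast Nat.le_succ _
    exact sub_nonneg.2 (Real.rpow_le_rpow_of_nonpos (hpos m) this (neg_nonpos.2 hs.le))
  rw [hasSum_iff_tendsto_nat_of_nonneg hnn]
  have hsum : ∀ n : ℕ, ∑ i ∈ Finset.range n,
      (((N + i : ℕ) : ℝ) ^ (-s) - ((N + i + 1 : ℕ) : ℝ) ^ (-s))
      = (N : ℝ) ^ (-s) - ((N + n : ℕ) : ℝ) ^ (-s) := by
    intro n
    have := Finset.sum_range_sub' (fun i : ℕ => ((N + i : ℕ) : ℝ) ^ (-s)) n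
    simpa [← Nat.add_assoc] using this
  simp only [hsum]
  have htend : Tendsto (fun n : ℕ => ((N + n : ℕ) : ℝ) ^ (-s)) atTop (nhds 0) := by
    have h1 : Tendsto (fun n : ℕ => ((N + n : ℕ) : ℝ)) atTop atTop := by
      apply tendsto_natCast_atTop_atTop.comp
      simpa [Nat.add_comm] using tendsto_add_atTop_nat N
    exact (tendsto_rpow_neg_atTop hs).comp h1
  have := Tendsto.sub (tendsto_const_nhds (x := (N : ℝ) ^ (-s))) htend
  simpa using this
lemma summable_shift {e : ℝ} (he : e < -1) (N : ℕ) :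
    Summable (fun m : ℕ => ((N + m : ℕ) : ℝ) ^ e) := by
  have h := Real.summable_nat_rpow.2 he
  have := (summable_nat_add_iff N).2 h
  simpa [Nat.add_comm] using this

-- weight lemma: n^(-q) ≤ q * ∑' m, (n+m)^(-q-1)
lemma weight_le {q : ℝ} (hq : 0 < q) (n : ℕ) (hn : 1 ≤ n) :
    ENNReal.ofReal ((n : ℝ) ^ (-q)) ≤
      ENNReal.ofReal q * ∑' m : ℕ, ENNReal.ofReal (((n + m : ℕ) : ℝ) ^ (-q - 1)) := by
  have hpos : ∀ m : ℕ, (0:ℝ) < ((n + m : ℕ) : ℝ) := by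
    intro m
    have : 1 ≤ n + m := le_trans hn (Nat.le_add_right n m)
    exact_mod_cast Nat.lt_of_lt_of_le Nat.zero_lt_one this
  have hsum : Summable (fun m : ℕ => ((n + m : ℕ) : ℝ) ^ (-q - 1)) :=
    summable_shift (by linarith) n
  have hreal : (n : ℝ) ^ (-q) ≤ q * ∑' m : ℕ, ((n + m : ℕ) : ℝ) ^ (-q - 1) := by
    have htel := tele_hasSum hq n hn
    have hle : ∀ m : ℕ, ((n + m : ℕ) : ℝ) ^ (-q) - ((n + m + 1 : ℕ) : ℝ) ^ (-q)
        ≤ q * ((n + m : ℕ) : ℝ) ^ (-q - 1) := by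
      intro m
      obtain ⟨c, hc1, hc2, hceq⟩ := mvt_rpow (s := q) ((n + m : ℕ) : ℝ) ((n + m + 1 : ℕ) : ℝ)
        (hpos m) (by exact_mod_cast Nat.lt_succ_self _)
      rw [hceq]
      have hsub : ((n + m + 1 : ℕ) : ℝ) - ((n + m : ℕ) : ℝ) = 1 := by push_cast; ring
      rw [hsub, mul_one]
      have : c ^ (-q - 1) ≤ ((n + m : ℕ) : ℝ) ^ (-q - 1) :=
        Real.rpow_le_rpow_of_nonpos (hpos m) hc1.le (by linarith)
      exact mul_le_mul_of_nonneg_left this hq.le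
    calc (n : ℝ) ^ (-q) = ∑' m : ℕ, (((n + m : ℕ) : ℝ) ^ (-q) - ((n + m + 1 : ℕ) : ℝ) ^ (-q)) :=
          htel.tsum_eq.symm
      _ ≤ ∑' m : ℕ, q * ((n + m : ℕ) : ℝ) ^ (-q - 1) :=
          Summable.tsum_le_tsum hle htel.summable (hsum.mul_left q)
      _ = q * ∑' m : ℕ, ((n + m : ℕ) : ℝ) ^ (-q - 1) := tsum_mul_left
  calc ENNReal.ofReal ((n : ℝ) ^ (-q))
      ≤ ENNReal.ofReal (q * ∑' m : ℕ, ((n + m : ℕ) : ℝ) ^ (-q - 1)) := ENNReal.ofReal_le_ofReal hreal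
    _ = ENNReal.ofReal q * ENNReal.ofReal (∑' m : ℕ, ((n + m : ℕ) : ℝ) ^ (-q - 1)) :=
        ENNReal.ofReal_mul hq.le
    _ = ENNReal.ofReal q * ∑' m : ℕ, ENNReal.ofReal (((n + m : ℕ) : ℝ) ^ (-q - 1)) := by
        rw [ENNReal.ofReal_tsum_of_nonneg (fun m => Real.rpow_nonneg (hpos m).le _) hsum]

-- tail lemma
lemma tail_le {r : ℝ} (hr : 0 < r) (M : ℕ) (hM : 1 ≤ M) :
    (∑' m : ℕ, ENNReal.ofReal (((M + m : ℕ) : ℝ) ^ (-(r + 1)))) ≤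
      ENNReal.ofReal (2 ^ (r + 1) / r * (M : ℝ) ^ (-r)) := by
  have hpos : ∀ m : ℕ, (0:ℝ) < ((M + m : ℕ) : ℝ) := by
    intro m
    have : 1 ≤ M + m := le_trans hM (Nat.le_add_right M m)
    exact_mod_cast Nat.lt_of_lt_of_le Nat.zero_lt_one this
  have hsum : Summable (fun m : ℕ => ((M + m : ℕ) : ℝ) ^ (-(r + 1))) :=
    summable_shift (by linarith) M
  have htel := tele_hasSum hr M hM
  have hle : ∀ m : ℕ, ((M + m : ℕ) : ℝ) ^ (-(r + 1)) ≤
      2 ^ (r + 1) / r * (((M + m : ℕ) : ℝ) ^ (-r) - ((M + m + 1 : ℕ) : ℝ) ^ (-r)) := by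
    intro m
    obtain ⟨c, hc1, hc2, hceq⟩ := mvt_rpow (s := r) ((M + m : ℕ) : ℝ) ((M + m + 1 : ℕ) : ℝ)
      (hpos m) (by exact_mod_cast Nat.lt_succ_self _)
    rw [hceq]
    have hsub : ((M + m + 1 : ℕ) : ℝ) - ((M + m : ℕ) : ℝ) = 1 := by push_cast; ring
    rw [hsub, mul_one]
    have hc2' : c ≤ 2 * ((M + m : ℕ) : ℝ) := by
      have h1 : ((M + m + 1 : ℕ) : ℝ) ≤ 2 * ((M + m : ℕ) : ℝ) := by
        have : (1:ℝ) ≤ ((M + m : ℕ) : ℝ) := by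
          exact_mod_cast le_trans hM (Nat.le_add_right M m)
        push_cast at this ⊢
        linarith
      linarith
    have hkey : (2 * ((M + m : ℕ) : ℝ)) ^ (-r - 1) ≤ c ^ (-r - 1) :=
      Real.rpow_le_rpow_of_nonpos (lt_trans (hpos m) hc1) hc2' (by linarith)
    have h2 : (2 * ((M + m : ℕ) : ℝ)) ^ (-r - 1)
        = 2 ^ (-r - 1) * ((M + m : ℕ) : ℝ) ^ (-r - 1) :=
      Real.mul_rpow (by norm_num) (hpos m).le
    rw [h2] at hkey
    -- goal : (M+m)^(-(r+1)) ≤ 2^(r+1)/r * (r * c^(-r-1))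
    have h3 : 2 ^ (r + 1) / r * (r * c ^ (-r - 1)) = 2 ^ (r + 1) * c ^ (-r - 1) := by
      field_simp
    rw [h3]
    have h4 : ((M + m : ℕ) : ℝ) ^ (-(r + 1)) = 2 ^ (r + 1) * (2 ^ (-r - 1) * ((M + m : ℕ) : ℝ) ^ (-r - 1)) := by
      rw [← mul_assoc, ← Real.rpow_add (by norm_num : (0:ℝ) < 2)]
      norm_num
      ring_nf
    rw [h4]
    exact mul_le_mul_of_nonneg_left hkey (Real.rpow_nonneg (by norm_num) _)
  have hreal : (∑' m : ℕ, ((M + m : ℕ) : ℝ) ^ (-(r + 1))) ≤ 2 ^ (r + 1) / r * (M : ℝ) ^ (-r) := by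
    calc (∑' m : ℕ, ((M + m : ℕ) : ℝ) ^ (-(r + 1)))
        ≤ ∑' m : ℕ, 2 ^ (r + 1) / r * (((M + m : ℕ) : ℝ) ^ (-r) - ((M + m + 1 : ℕ) : ℝ) ^ (-r)) :=
          Summable.tsum_le_tsum hle hsum (htel.summable.mul_left _)
      _ = 2 ^ (r + 1) / r * (M : ℝ) ^ (-r) := by
          rw [tsum_mul_left, htel.tsum_eq]
  calc (∑' m : ℕ, ENNReal.ofReal (((M + m : ℕ) : ℝ) ^ (-(r + 1))))
      = ENNReal.ofReal (∑' m : ℕ, ((M + m : ℕ) : ℝ) ^ (-(r + 1))) :=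
        (ENNReal.ofReal_tsum_of_nonneg (fun m => Real.rpow_nonneg (hpos m).le _) hsum).symm
    _ ≤ _ := ENNReal.ofReal_le_ofReal hreal

lemma key_bound {p ε : ℝ} (hp : 1 < p) (hε : 0 ≤ ε) (a : ℕ → ℝ≥0∞) (Gt : ℝ≥0∞) {t : ℝ}
    (ht : 0 < t)
    (hS : ∀ k : ℕ, 1 ≤ k → ∑ n ∈ Finset.Icc 1 k, a n ≤
      ENNReal.ofReal (2 * (k : ℝ) ^ (1 + ε / p)) * Gt) :
    (∑' n : ℕ, (if 0 < n ∧ t < (n : ℝ) ^ (1 + ε / p)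
        then ENNReal.ofReal ((n : ℝ) ^ (-(p + ε))) * a n else 0)) *
      ENNReal.ofReal (t ^ (p - 1))
      ≤ ENNReal.ofReal (2 * (p + ε) *
          (2 ^ ((p - 1) * (1 + ε / p) + 1) / ((p - 1) * (1 + ε / p)))) * Gt := by
  have hp0 : (0:ℝ) < p := lt_trans one_pos hp
  set α : ℝ := 1 + ε / p with hαdef
  set q : ℝ := p + ε with hqdef
  set r : ℝ := (p - 1) * α with hrdef
  have hα1 : (1:ℝ) ≤ α := le_add_of_nonneg_right (div_nonneg hε hp0.le)
  have hα0 : (0:ℝ) < α := lt_of_lt_of_le one_pos hα1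
  have hq0 : (0:ℝ) < q := by rw [hqdef]; linarith
  have hr0 : (0:ℝ) < r := mul_pos (by linarith) hα0
  have hrq : -q - 1 + α = -(r + 1) := by
    rw [hqdef, hrdef, hαdef]; field_simp; ring
  -- natural number cutoff
  obtain ⟨M, hM1, hMt, hcondM⟩ : ∃ M : ℕ, 1 ≤ M ∧ t ^ α⁻¹ ≤ (M : ℝ) ∧
      ∀ k : ℕ, 0 < k → t < (k : ℝ) ^ α → M ≤ k := by
    refine ⟨⌊t ^ α⁻¹⌋₊ + 1, Nat.le_add_left 1 _, ?_, ?_⟩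
    · push_cast
      exact (Nat.lt_floor_add_one _).le
    · intro k hk hkt
      have h1 : t ^ α⁻¹ < ((k : ℝ) ^ α) ^ α⁻¹ :=
        Real.rpow_lt_rpow ht.le hkt (by positivity)
      have h2 : ((k : ℝ) ^ α) ^ α⁻¹ = (k : ℝ) := by
        rw [← Real.rpow_mul (Nat.cast_nonneg k), mul_inv_cancel₀ hα0.ne', Real.rpow_one]
      rw [h2] at h1
      have := (Nat.floor_lt (Real.rpow_nonneg ht.le _)).2 h1
      omega
  -- abbreviations
  set F : ℕ → ℕ → ℝ≥0∞ := fun n m =>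
    if 0 < n ∧ t < (n : ℝ) ^ α then ENNReal.ofReal (((n + m : ℕ) : ℝ) ^ (-q - 1)) * a n else 0
    with hFdef
  set G2 : ℕ → ℕ → ℝ≥0∞ := fun k n =>
    if n ≤ k ∧ 0 < n ∧ t < (n : ℝ) ^ α then ENNReal.ofReal ((k : ℝ) ^ (-q - 1)) * a n else 0
    with hG2def
  have step1 : ∀ n : ℕ,
      (if 0 < n ∧ t < (n : ℝ) ^ α then ENNReal.ofReal ((n : ℝ) ^ (-q)) * a n else 0)
        ≤ ENNReal.ofReal q * ∑' m : ℕ, F n m := by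
    intro n
    by_cases h : 0 < n ∧ t < (n : ℝ) ^ α
    · simp only [hFdef, h, if_true, and_true]
      calc ENNReal.ofReal ((n : ℝ) ^ (-q)) * a n
          ≤ (ENNReal.ofReal q * ∑' m : ℕ, ENNReal.ofReal (((n + m : ℕ) : ℝ) ^ (-q - 1))) * a n :=
            mul_le_mul_left (weight_le hq0 n h.1) _
        _ = ENNReal.ofReal q * ∑' m : ℕ, ENNReal.ofReal (((n + m : ℕ) : ℝ) ^ (-q - 1)) * a n := by
            rw [mul_assoc, ENNReal.tsum_mul_right]
    · simp [h]
  have swap : (∑' n : ℕ, ∑' m : ℕ, F n m) = ∑' k : ℕ, ∑' n : ℕ, G2 k n := by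
    rw [← ENNReal.tsum_prod, ← ENNReal.tsum_prod]
    have hinj : Function.Injective (fun nm : ℕ × ℕ => (nm.1 + nm.2, nm.1)) := by
      intro x y hxy
      simp only [Prod.mk.injEq] at hxy
      obtain ⟨h1, h2⟩ := hxy
      exact Prod.ext h2 (by omega)
    have hsupp : Function.support (fun kn : ℕ × ℕ => G2 kn.1 kn.2) ⊆
        Set.range (fun nm : ℕ × ℕ => (nm.1 + nm.2, nm.1)) := by
      intro ⟨k, n⟩ hkn
      simp only [hG2def, Function.mem_support, ne_eq, ite_eq_right_iff, not_forall] at hkn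
      obtain ⟨⟨hnk, _⟩, _⟩ := hkn
      exact ⟨(n, k - n), by simp [Nat.add_sub_cancel' hnk]⟩
    have := Function.Injective.tsum_eq (f := fun kn : ℕ × ℕ => G2 kn.1 kn.2) hinj hsupp
    rw [← this]
    congr 1 with nm
    simp only [hFdef, hG2def, Nat.le_add_right, true_and]
  have inner : ∀ k : ℕ, (∑' n : ℕ, G2 k n) ≤
      (if M ≤ k then ENNReal.ofReal ((k : ℝ) ^ (-(r + 1))) else 0) * (ENNReal.ofReal 2 * Gt) := by
    intro k
    have hfin : ∀ n : ℕ, n ∉ Finset.range (k + 1) → G2 k n = 0 := by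
      intro n hn
      simp only [Finset.mem_range, not_lt] at hn
      simp only [hG2def, ite_eq_right_iff]
      intro ⟨hnk, _⟩
      omega
    rw [tsum_eq_sum hfin]
    by_cases hc : 0 < k ∧ t < (k : ℝ) ^ α
    · have hk1 : 1 ≤ k := hc.1
      have hkR : (0:ℝ) < (k : ℝ) := by exact_mod_cast hc.1
      calc ∑ n ∈ Finset.range (k + 1), G2 k n
          ≤ ∑ n ∈ Finset.range (k + 1),
              (if n ∈ Finset.Icc 1 k then ENNReal.ofReal ((k : ℝ) ^ (-q - 1)) * a n else 0) := by
            apply Finset.sum_le_sum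
            intro n _
            simp only [hG2def]
            by_cases h : n ≤ k ∧ 0 < n ∧ t < (n : ℝ) ^ α
            · rw [if_pos h, if_pos (Finset.mem_Icc.2 ⟨h.2.1, h.1⟩)]
            · rw [if_neg h]; exact zero_le
        _ = ∑ n ∈ Finset.Icc 1 k, ENNReal.ofReal ((k : ℝ) ^ (-q - 1)) * a n := by
            rw [Finset.sum_ite_mem, Finset.inter_eq_right.2]
            intro n hn
            simp only [Finset.mem_Icc] at hn
            exact Finset.mem_range.2 (by omega)
        _ = ENNReal.ofReal ((k : ℝ) ^ (-q - 1)) * ∑ n ∈ Finset.Icc 1 k, a n := by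
            rw [Finset.mul_sum]
        _ ≤ ENNReal.ofReal ((k : ℝ) ^ (-q - 1)) * (ENNReal.ofReal (2 * (k : ℝ) ^ α) * Gt) :=
            mul_le_mul_right (hS k hk1) _
        _ = ENNReal.ofReal ((k : ℝ) ^ (-q - 1) * (2 * (k : ℝ) ^ α)) * Gt := by
            rw [ENNReal.ofReal_mul (Real.rpow_nonneg hkR.le _), mul_assoc]
        _ = ENNReal.ofReal ((k : ℝ) ^ (-(r + 1)) * 2) * Gt := by
            have h5 : (k : ℝ) ^ (-q - 1) * (k : ℝ) ^ α = (k : ℝ) ^ (-(r + 1)) := by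
              rw [← Real.rpow_add hkR, hrq]
            congr 2
            rw [← h5]
            ring
        _ = (if M ≤ k then ENNReal.ofReal ((k : ℝ) ^ (-(r + 1))) else 0) *
              (ENNReal.ofReal 2 * Gt) := by
            rw [if_pos (hcondM k hc.1 hc.2)]
            rw [ENNReal.ofReal_mul (Real.rpow_nonneg hkR.le _)]
            ring
    · have : ∀ n ∈ Finset.range (k + 1), G2 k n = 0 := by
        intro n hn
        simp only [hG2def, ite_eq_right_iff]
        intro ⟨hnk, hn0, hnt⟩
        exfalso
        apply hc
        refine ⟨by omega, lt_of_lt_of_le hnt ?_⟩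
        exact Real.rpow_le_rpow (Nat.cast_nonneg n) (by exact_mod_cast hnk) hα0.le
      rw [Finset.sum_eq_zero this]
      exact zero_le
  have tailsum : (∑' k : ℕ, if M ≤ k then ENNReal.ofReal ((k : ℝ) ^ (-(r + 1))) else 0)
      ≤ ENNReal.ofReal (2 ^ (r + 1) / r * (M : ℝ) ^ (-r)) := by
    have hinj : Function.Injective (fun m : ℕ => M + m) := fun x y h => by simpa using h
    have hsupp : Function.support (fun k : ℕ =>
        if M ≤ k then ENNReal.ofReal ((k : ℝ) ^ (-(r + 1))) else 0) ⊆
        Set.range (fun m : ℕ => M + m) := by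
      intro k hk
      simp only [Function.mem_support, ne_eq, ite_eq_right_iff, not_forall] at hk
      obtain ⟨hMk, -⟩ := hk
      exact ⟨k - M, by simp only []; omega⟩
    have := Function.Injective.tsum_eq (f := fun k : ℕ =>
      if M ≤ k then ENNReal.ofReal ((k : ℝ) ^ (-(r + 1))) else 0) hinj hsupp
    rw [← this]
    have heq : ∀ m : ℕ, (if M ≤ M + m then ENNReal.ofReal (((M + m : ℕ) : ℝ) ^ (-(r + 1))) else 0)
        = ENNReal.ofReal (((M + m : ℕ) : ℝ) ^ (-(r + 1))) := by
      intro m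
      rw [if_pos (Nat.le_add_right M m)]
    calc (∑' m : ℕ, if M ≤ M + m then ENNReal.ofReal (((M + m : ℕ) : ℝ) ^ (-(r + 1))) else 0)
        = ∑' m : ℕ, ENNReal.ofReal (((M + m : ℕ) : ℝ) ^ (-(r + 1))) := by
          exact tsum_congr heq
      _ ≤ _ := tail_le hr0 M hM1
  -- final real inequality
  have hfinal_real : q * (2 ^ (r + 1) / r * (M : ℝ) ^ (-r)) * 2 * t ^ (p - 1)
      ≤ 2 * q * (2 ^ (r + 1) / r) := by
    have hMr : (M : ℝ) ^ (-r) * t ^ (p - 1) ≤ 1 := by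
      have htα : (0:ℝ) < t ^ α⁻¹ := Real.rpow_pos_of_pos ht _
      have h1 : (M : ℝ) ^ (-r) ≤ (t ^ α⁻¹) ^ (-r) :=
        Real.rpow_le_rpow_of_nonpos htα hMt (by linarith)
      have h2 : (t ^ α⁻¹) ^ (-r) = t ^ (-(p - 1)) := by
        rw [← Real.rpow_mul ht.le]
        congr 1
        rw [hrdef]
        field_simp
      rw [h2] at h1
      calc (M : ℝ) ^ (-r) * t ^ (p - 1) ≤ t ^ (-(p - 1)) * t ^ (p - 1) :=
            mul_le_mul_of_nonneg_right h1 (Real.rpow_nonneg ht.le _)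
        _ = 1 := by rw [← Real.rpow_add ht]; simp
    have hC : (0:ℝ) ≤ 2 * q * (2 ^ (r + 1) / r) := by positivity
    calc q * (2 ^ (r + 1) / r * (M : ℝ) ^ (-r)) * 2 * t ^ (p - 1)
        = (2 * q * (2 ^ (r + 1) / r)) * ((M : ℝ) ^ (-r) * t ^ (p - 1)) := by ring
      _ ≤ (2 * q * (2 ^ (r + 1) / r)) * 1 := mul_le_mul_of_nonneg_left hMr hC
      _ = 2 * q * (2 ^ (r + 1) / r) := mul_one _
  -- assemble
  calc (∑' n : ℕ, if 0 < n ∧ t < (n : ℝ) ^ α then ENNReal.ofReal ((n : ℝ) ^ (-q)) * a n else 0) *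
        ENNReal.ofReal (t ^ (p - 1))
      ≤ (∑' n : ℕ, ENNReal.ofReal q * ∑' m : ℕ, F n m) * ENNReal.ofReal (t ^ (p - 1)) :=
        mul_le_mul_left (ENNReal.tsum_le_tsum step1) _
    _ = ENNReal.ofReal q * (∑' k : ℕ, ∑' n : ℕ, G2 k n) * ENNReal.ofReal (t ^ (p - 1)) := by
        rw [ENNReal.tsum_mul_left, swap]
    _ ≤ ENNReal.ofReal q * (∑' k : ℕ,
          (if M ≤ k then ENNReal.ofReal ((k : ℝ) ^ (-(r + 1))) else 0) *
            (ENNReal.ofReal 2 * Gt)) * ENNReal.ofReal (t ^ (p - 1)) :=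
        mul_le_mul_left (mul_le_mul_right (ENNReal.tsum_le_tsum inner) _) _
    _ = ENNReal.ofReal q *
          ((∑' k : ℕ, (if M ≤ k then ENNReal.ofReal ((k : ℝ) ^ (-(r + 1))) else 0)) *
            (ENNReal.ofReal 2 * Gt)) * ENNReal.ofReal (t ^ (p - 1)) := by
        rw [ENNReal.tsum_mul_right]
    _ ≤ ENNReal.ofReal q *
          (ENNReal.ofReal (2 ^ (r + 1) / r * (M : ℝ) ^ (-r)) *
            (ENNReal.ofReal 2 * Gt)) * ENNReal.ofReal (t ^ (p - 1)) :=
        mul_le_mul_left (mul_le_mul_right (mul_le_mul_left tailsum _) _) _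
    _ = (ENNReal.ofReal q * ENNReal.ofReal (2 ^ (r + 1) / r * (M : ℝ) ^ (-r)) *
          ENNReal.ofReal 2 * ENNReal.ofReal (t ^ (p - 1))) * Gt := by ring
    _ = ENNReal.ofReal (q * (2 ^ (r + 1) / r * (M : ℝ) ^ (-r)) * 2 * t ^ (p - 1)) * Gt := by
        rw [← ENNReal.ofReal_mul hq0.le, ← ENNReal.ofReal_mul (by positivity),
          ← ENNReal.ofReal_mul (by positivity)]
    _ ≤ ENNReal.ofReal (2 * q * (2 ^ (r + 1) / r)) * Gt :=
        mul_le_mul_left (ENNReal.ofReal_le_ofReal hfinal_real) _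

/-- Core moment estimate (generalized Sawyer Lemma 3): the expectation of the series of
truncated `p`-th powers is finite. -/
theorem stmt7 {Ω : Type*} [MeasurableSpace Ω] (μ : Measure Ω) [IsProbabilityMeasure μ]
    (V : ℕ → Ω → ℝ) (hmeas : ∀ n, Measurable (V n)) (hVnn : ∀ n ω, 0 ≤ V n ω)
    (p ε : ℝ) (hp : 1 < p) (hε : 0 ≤ ε)
    (G : ℝ → ℝ≥0∞) (hG : ∫⁻ t in Set.Ioi (0 : ℝ), G t < ⊤)
    (hdom : ∀ j : ℕ, 1 ≤ j → ∀ t : ℝ, 0 < t →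
      ((j : ℝ≥0∞))⁻¹ * ∑ n ∈ Finset.Icc 1 ⌈(j : ℝ) ^ (p / (p + ε))⌉₊, μ {ω | t < V n ω}
        ≤ G t) :
    ∫⁻ ω, ∑' n : ℕ,
        ENNReal.ofReal ((min (V n ω) ((n : ℝ) ^ (1 + ε / p))) ^ p / (n : ℝ) ^ (p + ε)) ∂μ
      < ⊤ := by
  have hp0 : (0:ℝ) < p := lt_trans one_pos hp
  have hα0 : (0:ℝ) < 1 + ε / p := by positivity
  have hq0 : (0:ℝ) < p + ε := by linarith
  set C : ℝ := 2 * (p + ε) *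
      (2 ^ ((p - 1) * (1 + ε / p) + 1) / ((p - 1) * (1 + ε / p))) with hCdef
  -- the measurable per-n integrand
  set f : ℕ → Ω → ℝ≥0∞ := fun n ω =>
    ENNReal.ofReal ((min (V n ω) ((n : ℝ) ^ (1 + ε / p))) ^ p / (n : ℝ) ^ (p + ε)) with hfdef
  have hfmeas : ∀ n, Measurable (f n) := by
    intro n
    apply Measurable.ennreal_ofReal
    exact (((hmeas n).min measurable_const).pow measurable_const).div_const _
  -- φ
  set φ : ℕ → ℝ → ℝ≥0∞ := fun n t =>
    (if 0 < n ∧ t < (n : ℝ) ^ (1 + ε / p)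
      then ENNReal.ofReal ((n : ℝ) ^ (-(p + ε))) * μ {ω | t < V n ω} else 0) *
      ENNReal.ofReal (t ^ (p - 1)) with hφdef
  have hφmeas : ∀ n, Measurable (φ n) := by
    intro n
    have hmono : Antitone (fun t : ℝ => μ {ω | t < V n ω}) := by
      intro s t hst
      exact measure_mono (fun ω h => lt_of_le_of_lt hst h)
    have hset : MeasurableSet {t : ℝ | 0 < n ∧ t < (n : ℝ) ^ (1 + ε / p)} := by
      by_cases hn : 0 < n
      · simp only [hn, true_and]
        exact measurableSet_Iio
      · simp only [hn, false_and]
        exact MeasurableSet.empty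
    refine Measurable.mul (Measurable.ite hset (measurable_const.mul hmono.measurable)
      measurable_const) ?_
    exact (measurable_id.pow measurable_const).ennreal_ofReal
  -- per-n estimate
  have per_n : ∀ n : ℕ, ∫⁻ ω, f n ω ∂μ ≤
      ENNReal.ofReal p * ∫⁻ t in Set.Ioi (0:ℝ), φ n t := by
    intro n
    rcases Nat.eq_zero_or_pos n with h0 | hn
    · subst h0
      have : ∀ ω, f 0 ω = 0 := by
        intro ω
        simp only [hfdef, Nat.cast_zero]
        rw [Real.zero_rpow hα0.ne', min_eq_right (hVnn 0 ω), Real.zero_rpow hp0.ne']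
        simp
      simp only [this]
      rw [lintegral_zero]
      exact zero_le
    · have hn1R : (1:ℝ) ≤ (n:ℝ) := by exact_mod_cast hn
      have hnR : (0:ℝ) < (n:ℝ) := by linarith
      have hc : (0:ℝ) < (n : ℝ) ^ (1 + ε / p) := Real.rpow_pos_of_pos hnR _
      have hcq : (0:ℝ) < (n : ℝ) ^ (p + ε) := Real.rpow_pos_of_pos hnR _
      have hnn : 0 ≤ᵐ[μ] fun ω => min (V n ω) ((n : ℝ) ^ (1 + ε / p)) :=
        Filter.Eventually.of_forall (fun ω => le_min (hVnn n ω) hc.le)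
      have hfm : AEMeasurable (fun ω => min (V n ω) ((n : ℝ) ^ (1 + ε / p))) μ :=
        ((hmeas n).min measurable_const).aemeasurable
      have hrw : ∀ ω, f n ω =
          ENNReal.ofReal ((min (V n ω) ((n : ℝ) ^ (1 + ε / p))) ^ p) *
            ENNReal.ofReal ((n : ℝ) ^ (-(p + ε))) := by
        intro ω
        simp only [hfdef]
        rw [div_eq_mul_inv, ENNReal.ofReal_mul (Real.rpow_nonneg (le_min (hVnn n ω) hc.le) p),
          ← Real.rpow_neg hnR.le]
      simp only [hrw]
      rw [lintegral_mul_const' _ _ ENNReal.ofReal_ne_top,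
        lintegral_rpow_eq_lintegral_meas_lt_mul μ hnn hfm hp0, mul_assoc]
      apply mul_le_mul_right
      rw [← lintegral_mul_const' _ _ ENNReal.ofReal_ne_top]
      apply lintegral_mono
      intro t
      by_cases htc : t < (n : ℝ) ^ (1 + ε / p)
      · simp only [hφdef, if_pos (And.intro hn htc)]
        have hsub : μ {a | t < min (V n a) ((n : ℝ) ^ (1 + ε / p))} ≤ μ {ω | t < V n ω} :=
          measure_mono (fun a (ha : t < min (V n a) ((n : ℝ) ^ (1 + ε / p))) =>
            Set.mem_setOf_eq ▸ lt_of_lt_of_le ha (min_le_left _ _))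
        calc μ {a | t < min (V n a) ((n : ℝ) ^ (1 + ε / p))} * ENNReal.ofReal (t ^ (p - 1)) *
              ENNReal.ofReal ((n : ℝ) ^ (-(p + ε)))
            ≤ μ {ω | t < V n ω} * ENNReal.ofReal (t ^ (p - 1)) *
              ENNReal.ofReal ((n : ℝ) ^ (-(p + ε))) := by
              exact mul_le_mul_left (mul_le_mul_left hsub _) _
          _ = ENNReal.ofReal ((n : ℝ) ^ (-(p + ε))) * μ {ω | t < V n ω} *
              ENNReal.ofReal (t ^ (p - 1)) := by ring
      · have hempty : {a | t < min (V n a) ((n : ℝ) ^ (1 + ε / p))} = ∅ := by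
          ext a
          simp only [Set.mem_setOf_eq, Set.mem_empty_iff_false, iff_false, not_lt]
          exact le_trans (min_le_right _ _) (not_lt.1 htc)
        have hz : μ {a | t < min (V n a) ((n : ℝ) ^ (1 + ε / p))} = 0 := by
          rw [hempty]; simp
        simp only [hz, zero_mul]
        exact zero_le
  -- derive the partial sum bound
  have hS : ∀ t : ℝ, 0 < t → ∀ k : ℕ, 1 ≤ k →
      ∑ n ∈ Finset.Icc 1 k, μ {ω | t < V n ω} ≤
        ENNReal.ofReal (2 * (k : ℝ) ^ (1 + ε / p)) * G t := by
    intro t ht k hk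
    have hk1R : (1:ℝ) ≤ (k:ℝ) := by exact_mod_cast hk
    have hkα1 : (1:ℝ) ≤ (k:ℝ) ^ (1 + ε / p) := by
      calc (1:ℝ) = (k:ℝ) ^ (0:ℝ) := by rw [Real.rpow_zero]
        _ ≤ (k:ℝ) ^ (1 + ε / p) := Real.rpow_le_rpow_of_exponent_le hk1R hα0.le
    set j : ℕ := ⌈(k:ℝ) ^ (1 + ε / p)⌉₊ with hjdef
    have hj1 : 1 ≤ j := Nat.one_le_iff_ne_zero.2 (by
      have : 0 < j := Nat.ceil_pos.2 (lt_of_lt_of_le one_pos hkα1)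
      omega)
    have hexp : (1 + ε / p) * (p / (p + ε)) = 1 := by field_simp
    have hjk : (k:ℝ) ≤ (j:ℝ) ^ (p / (p + ε)) := by
      have h1 : ((k:ℝ) ^ (1 + ε / p)) ≤ (j:ℝ) := Nat.le_ceil _
      have h2 : (k:ℝ) = ((k:ℝ) ^ (1 + ε / p)) ^ (p / (p + ε)) := by
        rw [← Real.rpow_mul (Nat.cast_nonneg k), hexp, Real.rpow_one]
      rw [h2]
      exact Real.rpow_le_rpow (Real.rpow_nonneg (Nat.cast_nonneg k) _) h1 (by positivity)
    have hkceil : k ≤ ⌈(j:ℝ) ^ (p / (p + ε))⌉₊ := by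
      have := le_trans hjk (Nat.le_ceil _)
      exact_mod_cast this
    have hsubset : Finset.Icc 1 k ⊆ Finset.Icc 1 ⌈(j:ℝ) ^ (p / (p + ε))⌉₊ :=
      Finset.Icc_subset_Icc_right hkceil
    have hjne : (j : ℝ≥0∞) ≠ 0 := by
      simp only [ne_eq, Nat.cast_eq_zero]
      omega
    have hjtop : (j : ℝ≥0∞) ≠ ⊤ := ENNReal.natCast_ne_top j
    calc ∑ n ∈ Finset.Icc 1 k, μ {ω | t < V n ω}
        ≤ ∑ n ∈ Finset.Icc 1 ⌈(j:ℝ) ^ (p / (p + ε))⌉₊, μ {ω | t < V n ω} :=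
          Finset.sum_le_sum_of_subset hsubset
      _ = (j : ℝ≥0∞) * ((j : ℝ≥0∞)⁻¹ *
            ∑ n ∈ Finset.Icc 1 ⌈(j:ℝ) ^ (p / (p + ε))⌉₊, μ {ω | t < V n ω}) := by
          rw [← mul_assoc, ENNReal.mul_inv_cancel hjne hjtop, one_mul]
      _ ≤ (j : ℝ≥0∞) * G t := mul_le_mul_right (hdom j hj1 t ht) _
      _ ≤ ENNReal.ofReal (2 * (k : ℝ) ^ (1 + ε / p)) * G t := by
          apply mul_le_mul_left
          rw [← ENNReal.ofReal_natCast j]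
          apply ENNReal.ofReal_le_ofReal
          have := Nat.ceil_lt_add_one (Real.rpow_nonneg (Nat.cast_nonneg k) (1 + ε / p))
          calc (j:ℝ) ≤ (k:ℝ) ^ (1 + ε / p) + 1 := this.le
            _ ≤ 2 * (k : ℝ) ^ (1 + ε / p) := by linarith
  -- a.e. bound on the t-integrand
  have hae : ∀ᵐ t ∂(volume.restrict (Set.Ioi (0:ℝ))),
      (∑' n : ℕ, φ n t) ≤ ENNReal.ofReal C * G t := by
    rw [ae_restrict_iff' measurableSet_Ioi]
    apply ae_of_all
    intro t ht
    have ht' : 0 < t := ht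
    calc (∑' n : ℕ, φ n t)
        = (∑' n : ℕ, (if 0 < n ∧ t < (n : ℝ) ^ (1 + ε / p)
            then ENNReal.ofReal ((n : ℝ) ^ (-(p + ε))) * μ {ω | t < V n ω} else 0)) *
            ENNReal.ofReal (t ^ (p - 1)) := ENNReal.tsum_mul_right
      _ ≤ ENNReal.ofReal C * G t :=
          key_bound hp hε (fun n => μ {ω | t < V n ω}) (G t) ht' (hS t ht')
  calc ∫⁻ ω, ∑' n : ℕ, f n ω ∂μ
      = ∑' n : ℕ, ∫⁻ ω, f n ω ∂μ := lintegral_tsum (fun n => (hfmeas n).aemeasurable)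
    _ ≤ ∑' n : ℕ, ENNReal.ofReal p * ∫⁻ t in Set.Ioi (0:ℝ), φ n t :=
        ENNReal.tsum_le_tsum per_n
    _ = ENNReal.ofReal p * ∑' n : ℕ, ∫⁻ t in Set.Ioi (0:ℝ), φ n t := ENNReal.tsum_mul_left
    _ = ENNReal.ofReal p * ∫⁻ t in Set.Ioi (0:ℝ), ∑' n : ℕ, φ n t := by
        rw [← lintegral_tsum (fun n => (hφmeas n).aemeasurable)]
    _ ≤ ENNReal.ofReal p * ∫⁻ t in Set.Ioi (0:ℝ), ENNReal.ofReal C * G t :=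
        mul_le_mul_right (lintegral_mono_ae hae) _
    _ = ENNReal.ofReal p * (ENNReal.ofReal C * ∫⁻ t in Set.Ioi (0:ℝ), G t) := by
        rw [lintegral_const_mul' _ _ ENNReal.ofReal_ne_top]
    _ < ⊤ := by
        apply ENNReal.mul_lt_top
        · exact ENNReal.ofReal_lt_top
        · exact ENNReal.mul_lt_top ENNReal.ofReal_lt_top hG
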